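/- The measure ν_α on the Rado graph vertices commutes with itself (Fubini for ν_α): for every finitely-supported function f : V × V → [0,1], the iterated integrals agree: ∫∫ f(x,y) ν_α(dy) ν_α(dx) = ∫∫ f(x,y) ν_α(dx) ν_α(dy). In particular, for the indicator of the edge relation, both iterated integrals equal α. -/

import Mathlib

/-!
By back and forth, a countable graph with the extension property is homogeneous: tuples with
the same adjacency type are conjugate by an automorphism. So a nonnegative function invariant
under the automorphisms fixing an injective tuple `a` is constant, say `h c`, on the class of
vertices with adjacency pattern `c` to `a`, and its integral is `∑ c, h c * w c`, where
`w c = ∏ i, (if c i then α else 1 - α)` is the `ν`-mass of that class. Applying this twice, the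
iterated integral of `f` becomes a sum over the patterns `c`, `c'` of the two points and their
adjacency bit `b` of the value of `f` on a pair of that type, times `w c * w c'` and `α` or
`1 - α`. This two-point type is symmetric under swapping the points, whence Fubini; for the edge
relation the inner integral is already the constant `α`.
-/

/-- A graph has the extension property if for all disjoint finite vertex sets `A`, `B`
there is a vertex outside `A ∪ B` adjacent to everything in `A` and nothing in `B`. -/
def HasExtensionProperty {V : Type*} (G : SimpleGraph V) : Prop :=
  ∀ A B : Finset V, Disjoint A B →
    ∃ v, v ∉ A ∧ v ∉ B ∧ (∀ a ∈ A, G.Adj v a) ∧ ∀ b ∈ B, ¬ G.Adj v b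

/-- The finite list of vertices `a 0, …, a (n-1)` supports the set `S`:
every automorphism of `G` fixing each `a i` maps `S` to itself. -/
def SupportsSet {V : Type} (G : SimpleGraph V) {n : ℕ} (a : Fin n → V) (S : Set V) : Prop :=
  ∀ σ : G ≃g G, (∀ i, σ (a i) = a i) → σ '' S = S

/-- The family `v` realizes all `2^n` adjacency patterns to `a 0, …, a (n-1)`:
`v c` lies outside the support and is adjacent to `a i` exactly when `c i = true`. -/
def RealizesPatterns {V : Type} (G : SimpleGraph V) {n : ℕ}
    (a : Fin n → V) (v : (Fin n → Bool) → V) : Prop :=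
  ∀ c : Fin n → Bool, v c ∉ Set.range a ∧ ∀ i, (G.Adj (v c) (a i) ↔ c i = true)

open scoped Classical in
/-- `ν_α(S) = Σ_j [v_j ∈ S] ∏_i (α[E(v_j,a_i)] + (1-α)[¬E(v_j,a_i)])`, the candidate
value of the measure of `S`, computed from pattern representatives `v`. -/
noncomputable def patVal {V : Type} (α : ℝ) {n : ℕ} (S : Set V)
    (v : (Fin n → Bool) → V) : ℝ :=
  ∑ c : Fin n → Bool,
    (if v c ∈ S then (1:ℝ) else 0) * ∏ i, (if c i then α else 1 - α)

/-- A set is finitely supported if some finite list of vertices supports it. -/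
def FinitelySupportedSet {V : Type} (G : SimpleGraph V) (S : Set V) : Prop :=
  ∃ (n : ℕ) (a : Fin n → V), Function.Injective a ∧ SupportsSet G a S

/-- A function on vertices is finitely supported (in the nominal sense):
it is invariant under all automorphisms fixing some finite list of vertices. -/
def FinSuppFun {V : Type} (G : SimpleGraph V) (f : V → ℝ) : Prop :=
  ∃ (n : ℕ) (a : Fin n → V), ∀ σ : G ≃g G, (∀ i, σ (a i) = a i) → ∀ x, f (σ x) = f x

/-- A binary function on vertices is finitely supported (in the nominal sense). -/
def FinSuppFun₂ {V : Type} (G : SimpleGraph V) (f : V → V → ℝ) : Prop :=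
  ∃ (n : ℕ) (a : Fin n → V), ∀ σ : G ≃g G, (∀ i, σ (a i) = a i) →
    ∀ x y, f (σ x) (σ y) = f x y

open scoped Classical in
/-- The integral of a `[0,1]`-valued function against a finitely-additive measure `ν`
on finitely-supported sets, defined as the supremum of the `ν`-sums of simple
functions (with nonnegative weights and finitely-supported level sets) dominated
by `f`. -/
noncomputable def nomIntegral {V : Type} (G : SimpleGraph V)
    (ν : Set V → ℝ) (f : V → ℝ) : ℝ :=
  sSup {r : ℝ | ∃ (m : ℕ) (t : Fin m → ℝ) (U : Fin m → Set V),
    (∀ i, 0 ≤ t i) ∧ (∀ i, FinitelySupportedSet G (U i)) ∧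
    (∀ x, (∑ i, t i * (if x ∈ U i then (1:ℝ) else 0)) ≤ f x) ∧
    r = ∑ i, t i * ν (U i)}

section BackAndForth

variable {V : Type*} {G : SimpleGraph V}

abbrev FinPartialIso (G : SimpleGraph V) : Type _ :=
  {s : Finset (V × V) //
    ∀ p ∈ s, ∀ q ∈ s, (p.1 = q.1 ↔ p.2 = q.2) ∧ (G.Adj p.1 q.1 ↔ G.Adj p.2 q.2)}

namespace FinPartialIso

def symm (f : FinPartialIso G) : FinPartialIso G :=
  ⟨f.1.map (Equiv.prodComm V V).toEmbedding, by
    intro p hp q hq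
    rw [Finset.mem_map_equiv] at hp hq
    exact ⟨(f.2 _ hp _ hq).1.symm, (f.2 _ hp _ hq).2.symm⟩⟩

theorem mem_symm {f : FinPartialIso G} {p : V × V} : p ∈ f.symm.1 ↔ p.swap ∈ f.1 :=
  Finset.mem_map_equiv

theorem symm_le_symm {f g : FinPartialIso G} (h : f ≤ g) : f.symm ≤ g.symm :=
  fun _ hp => mem_symm.2 (h (mem_symm.1 hp))

theorem symm_symm (f : FinPartialIso G) : f.symm.symm = f :=
  Subtype.ext <| Finset.ext fun _ => by rw [mem_symm, mem_symm, Prod.swap_swap]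

theorem isCofinal_mem_dom (hG : HasExtensionProperty G) (x : V) :
    IsCofinal {g : FinPartialIso G | ∃ y, (x, y) ∈ g.1} := by
  classical
  intro f
  by_cases hx : ∃ y, (x, y) ∈ f.1
  · exact ⟨f, hx, le_rfl⟩
  push Not at hx
  set A := (f.1.filter fun p => G.Adj x p.1).image Prod.snd
  set B := (f.1.filter fun p => ¬ G.Adj x p.1).image Prod.snd
  have hdisj : Disjoint A B := by
    simp only [A, B, Finset.disjoint_left, Finset.mem_image, Finset.mem_filter]
    rintro _ ⟨p, ⟨hp, hpx⟩, rfl⟩ ⟨q, ⟨hq, hqx⟩, hqp⟩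
    exact hqx ((f.2 p hp q hq).1.2 hqp.symm ▸ hpx)
  obtain ⟨y, hyA, hyB, hA, hB⟩ := hG _ _ hdisj
  have hy : ∀ p ∈ f.1, y ≠ p.2 ∧ (G.Adj x p.1 ↔ G.Adj y p.2) := by
    intro p hp
    by_cases hpx : G.Adj x p.1
    · have hmem : p.2 ∈ A := Finset.mem_image_of_mem Prod.snd (Finset.mem_filter.2 ⟨hp, hpx⟩)
      exact ⟨fun h => hyA (h ▸ hmem), iff_of_true hpx (hA _ hmem)⟩
    · have hmem : p.2 ∈ B := Finset.mem_image_of_mem Prod.snd (Finset.mem_filter.2 ⟨hp, hpx⟩)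
      exact ⟨fun h => hyB (h ▸ hmem), iff_of_false hpx (hB _ hmem)⟩
  have hxp : ∀ p ∈ f.1, x ≠ p.1 := fun p hp h => hx p.2 (h ▸ hp)
  refine ⟨⟨insert (x, y) f.1, ?_⟩, ⟨y, Finset.mem_insert_self _ _⟩, Finset.subset_insert _ _⟩
  intro p hp q hq
  rcases Finset.mem_insert.1 hp with rfl | hp <;> rcases Finset.mem_insert.1 hq with rfl | hq
  · simp
  · exact ⟨iff_of_false (hxp q hq) (hy q hq).1, (hy q hq).2⟩
  · exact ⟨iff_of_false (hxp p hp).symm (hy p hp).1.symm,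
      by rw [G.adj_comm, G.adj_comm p.2]; exact (hy p hp).2⟩
  · exact f.2 p hp q hq

theorem isCofinal_mem_cod (hG : HasExtensionProperty G) (y : V) :
    IsCofinal {g : FinPartialIso G | ∃ x, (x, y) ∈ g.1} := by
  intro f
  obtain ⟨g, ⟨x, hx⟩, hfg⟩ := isCofinal_mem_dom hG y f.symm
  exact ⟨g.symm, ⟨x, mem_symm.2 hx⟩, f.symm_symm ▸ symm_le_symm hfg⟩

theorem exists_iso_extending [Countable V] (hG : HasExtensionProperty G)
    (f : FinPartialIso G) : ∃ σ : G ≃g G, ∀ p ∈ f.1, σ p.1 = p.2 := by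
  cases nonempty_encodable V
  let 𝒟 : V ⊕ V → Order.Cofinal (FinPartialIso G) :=
    Sum.elim (fun x => ⟨_, isCofinal_mem_dom hG x⟩) (fun y => ⟨_, isCofinal_mem_cod hG y⟩)
  let I := Order.idealOfCofinals f 𝒟
  let T : Set (V × V) := {p | ∃ g ∈ I, p ∈ g.1}
  have hT : ∀ p ∈ T, ∀ q ∈ T, (p.1 = q.1 ↔ p.2 = q.2) ∧ (G.Adj p.1 q.1 ↔ G.Adj p.2 q.2) := by
    rintro p ⟨g, hg, hp⟩ q ⟨h, hh, hq⟩
    obtain ⟨k, -, hgk, hhk⟩ := I.directed g hg h hh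
    exact k.2 p (hgk hp) q (hhk hq)
  have hdom : ∀ x, ∃ y, (x, y) ∈ T := fun x => by
    obtain ⟨g, ⟨y, hy⟩, hg⟩ := Order.cofinal_meets_idealOfCofinals f 𝒟 (Sum.inl x)
    exact ⟨y, g, hg, hy⟩
  have hcod : ∀ y, ∃ x, (x, y) ∈ T := fun y => by
    obtain ⟨g, ⟨x, hx⟩, hg⟩ := Order.cofinal_meets_idealOfCofinals f 𝒟 (Sum.inr y)
    exact ⟨x, g, hg, hx⟩
  choose F hF using hdom
  choose F' hF' using hcod
  refine ⟨⟨⟨F, F', fun x => ?_, fun y => ?_⟩, fun {x y} => (hT _ (hF x) _ (hF y)).2.symm⟩,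
    fun p hp => ?_⟩
  · exact (hT _ (hF' (F x)) _ (hF x)).1.2 rfl
  · exact (hT _ (hF (F' y)) _ (hF' y)).1.1 rfl
  · exact (hT _ (hF p.1) _ ⟨f, Order.mem_idealOfCofinals f 𝒟, hp⟩).1.1 rfl

end FinPartialIso

end BackAndForth

section PatternClasses

variable {V : Type} {G : SimpleGraph V} {n : ℕ}

def patternClass (G : SimpleGraph V) (a : Fin n → V) (c : Fin n → Bool) : Set V :=
  {x | x ∉ Set.range a ∧ ∀ i, G.Adj x (a i) ↔ c i = true}

theorem RealizesPatterns.mem_patternClass {a : Fin n → V} {v : (Fin n → Bool) → V}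
    (hv : RealizesPatterns G a v) (c : Fin n → Bool) : v c ∈ patternClass G a c :=
  hv c

theorem eq_of_mem_patternClass {a : Fin n → V} {c c' : Fin n → Bool} {x : V}
    (hc : x ∈ patternClass G a c) (hc' : x ∈ patternClass G a c') : c = c' :=
  funext fun i => Bool.eq_iff_iff.2 ((hc.2 i).symm.trans (hc'.2 i))

theorem exists_mem_patternClass {a : Fin n → V} {x : V} (hx : x ∉ Set.range a) :
    ∃ c, x ∈ patternClass G a c := by
  classical
  exact ⟨fun i => decide (G.Adj x (a i)), hx, fun i => decide_eq_true_iff.symm⟩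

open scoped Classical in
theorem sum_mul_ite_mem_patternClass {a : Fin n → V} {c : Fin n → Bool} {x : V}
    (hx : x ∈ patternClass G a c) (h : (Fin n → Bool) → ℝ) :
    ∑ c', h c' * (if x ∈ patternClass G a c' then 1 else 0) = h c := by
  rw [Finset.sum_eq_single_of_mem c (Finset.mem_univ c), if_pos hx, mul_one]
  intro c' _ hc'
  rw [if_neg fun hx' => hc' (eq_of_mem_patternClass hx' hx), mul_zero]

theorem mem_patternClass_cons {a : Fin n → V} {c : Fin n → Bool} {x y : V} {b : Bool} :
    y ∈ patternClass G (Fin.cons x a) (Fin.cons b c) ↔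
      y ∈ patternClass G a c ∧ y ≠ x ∧ (G.Adj y x ↔ b = true) := by
  simp only [patternClass, Set.mem_ofPred_eq, Fin.range_cons, Set.mem_insert_iff,
    Fin.forall_fin_succ, Fin.cons_zero, Fin.cons_succ]
  tauto

theorem apply_mem_patternClass_comp_iff (σ : G ≃g G) {a : Fin n → V} {c : Fin n → Bool}
    {x : V} : σ x ∈ patternClass G (σ ∘ a) c ↔ x ∈ patternClass G a c := by
  simp [patternClass, Set.range_comp, σ.map_adj_iff]

theorem apply_mem_patternClass_iff {σ : G ≃g G} {a : Fin n → V} (hσ : ∀ i, σ (a i) = a i)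
    {c : Fin n → Bool} {x : V} : σ x ∈ patternClass G a c ↔ x ∈ patternClass G a c := by
  conv_lhs => rw [← funext hσ]
  exact apply_mem_patternClass_comp_iff σ

theorem supportsSet_patternClass (a : Fin n → V) (c : Fin n → Bool) :
    SupportsSet G a (patternClass G a c) := by
  intro σ hσ
  ext y
  constructor
  · rintro ⟨x, hx, rfl⟩
    exact (apply_mem_patternClass_iff hσ).2 hx
  · intro hy
    refine ⟨σ.symm y, (apply_mem_patternClass_iff hσ).1 ?_, σ.apply_symm_apply y⟩
    rwa [σ.apply_symm_apply]

theorem apply_eq_self_of_range_subset {m : ℕ} {σ : V → V} {a : Fin n → V} {b : Fin m → V}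
    (hσ : ∀ j, σ (b j) = b j) (hab : Set.range a ⊆ Set.range b) (i : Fin n) : σ (a i) = a i := by
  obtain ⟨j, hj⟩ := hab ⟨i, rfl⟩
  rw [← hj, hσ j]

theorem SupportsSet.mono {m : ℕ} {a : Fin n → V} {b : Fin m → V} {S : Set V}
    (hS : SupportsSet G a S) (hab : Set.range a ⊆ Set.range b) : SupportsSet G b S :=
  fun σ hσ => hS σ (apply_eq_self_of_range_subset hσ hab)

theorem FinSuppFun₂.exists_injective {f : V → V → ℝ} (hf : FinSuppFun₂ G f) :
    ∃ (n : ℕ) (a : Fin n → V), Function.Injective a ∧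
      ∀ σ : G ≃g G, (∀ i, σ (a i) = a i) → ∀ x y, f (σ x) (σ y) = f x y := by
  obtain ⟨m, b, hb⟩ := hf
  obtain ⟨n, a, ha, hab⟩ := (Set.finite_range b).fin_param
  exact ⟨n, a, ha, fun σ hσ => hb σ (apply_eq_self_of_range_subset hσ hab.symm.subset)⟩

theorem patternClass_nonempty (hG : HasExtensionProperty G) {a : Fin n → V}
    (ha : Function.Injective a) (c : Fin n → Bool) : (patternClass G a c).Nonempty := by
  classical
  have hdisj : Disjoint ((Finset.univ.filter fun i => c i = true).image a)
      ((Finset.univ.filter fun i => c i = false).image a) := by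
    rw [Finset.disjoint_image ha]
    exact Finset.disjoint_filter.2 fun i _ h => by simp [h]
  obtain ⟨x, hxA, hxB, hA, hB⟩ := hG _ _ hdisj
  refine ⟨x, ?_, fun i => ?_⟩
  · rintro ⟨i, rfl⟩
    cases hci : c i
    · exact hxB (Finset.mem_image_of_mem a (by simp [hci]))
    · exact hxA (Finset.mem_image_of_mem a (by simp [hci]))
  · cases hci : c i
    · exact iff_of_false (hB _ (Finset.mem_image_of_mem a (by simp [hci]))) Bool.false_ne_true
    · exact iff_of_true (hA _ (Finset.mem_image_of_mem a (by simp [hci]))) rfl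

theorem exists_realizesPatterns (hG : HasExtensionProperty G) {a : Fin n → V}
    (ha : Function.Injective a) : ∃ v, RealizesPatterns G a v :=
  ⟨fun c => (patternClass_nonempty hG ha c).some, fun c => (patternClass_nonempty hG ha c).some_mem⟩

theorem exists_iso_fixing_apply_eq [Countable V] (hG : HasExtensionProperty G)
    {a : Fin n → V} {c : Fin n → Bool} {x y : V}
    (hx : x ∈ patternClass G a c) (hy : y ∈ patternClass G a c) :
    ∃ σ : G ≃g G, (∀ i, σ (a i) = a i) ∧ σ x = y := by
  classical
  have key : ∀ j, (x = a j ↔ y = a j) ∧ (G.Adj x (a j) ↔ G.Adj y (a j)) := fun j =>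
    ⟨iff_of_false (fun h => hx.1 ⟨j, h.symm⟩) (fun h => hy.1 ⟨j, h.symm⟩),
      (hx.2 j).trans (hy.2 j).symm⟩
  let f : FinPartialIso G := ⟨insert (x, y) (Finset.univ.image fun i => (a i, a i)), by
    intro p hp q hq
    simp only [Finset.mem_insert, Finset.mem_image, Finset.mem_univ, true_and] at hp hq
    rcases hp with rfl | ⟨i, rfl⟩ <;> rcases hq with rfl | ⟨j, rfl⟩
    · simp
    · exact key j
    · exact ⟨eq_comm.trans ((key i).1.trans eq_comm),
        by rw [G.adj_comm, G.adj_comm (a i)]; exact (key i).2⟩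
    · exact ⟨Iff.rfl, Iff.rfl⟩⟩
  obtain ⟨σ, hσ⟩ := f.exists_iso_extending hG
  exact ⟨σ, fun i => hσ (a i, a i) (Finset.mem_insert_of_mem (by simp)),
    hσ (x, y) (Finset.mem_insert_self _ _)⟩

theorem eq_of_mem_patternClass_cons_of_invariant {β : Type*} [Countable V]
    (hG : HasExtensionProperty G) {a : Fin n → V} {f : V → V → β}
    (hf : ∀ σ : G ≃g G, (∀ i, σ (a i) = a i) → ∀ x y, f (σ x) (σ y) = f x y)
    {c : Fin n → Bool} {d : Fin (n + 1) → Bool} {x x' y y' : V}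
    (hx : x ∈ patternClass G a c) (hx' : x' ∈ patternClass G a c)
    (hy : y ∈ patternClass G (Fin.cons x a) d) (hy' : y' ∈ patternClass G (Fin.cons x' a) d) :
    f x y = f x' y' := by
  obtain ⟨σ, hσa, rfl⟩ := exists_iso_fixing_apply_eq hG hx hx'
  have hσy : σ y ∈ patternClass G (Fin.cons (σ x) a) d := by
    have hσa' : ⇑σ ∘ a = a := funext hσa
    rwa [← apply_mem_patternClass_comp_iff σ, Fin.comp_cons, hσa'] at hy
  obtain ⟨τ, hτ, rfl⟩ := exists_iso_fixing_apply_eq hG hσy hy'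
  simp only [Fin.forall_fin_succ, Fin.cons_zero, Fin.cons_succ] at hτ
  rw [← hτ.1, hf τ hτ.2, hf σ hσa]

end PatternClasses

section PatternMeasure

open scoped Classical

variable {V : Type} {G : SimpleGraph V} {α : ℝ} {ν : Set V → ℝ} {n : ℕ}

def patternWeight (α : ℝ) (c : Fin n → Bool) : ℝ :=
  ∏ i, if c i then α else 1 - α

theorem patternWeight_nonneg (hα : α ∈ Set.Icc (0:ℝ) 1) (c : Fin n → Bool) :
    0 ≤ patternWeight α c :=
  Finset.prod_nonneg fun i _ => by split <;> linarith [hα.1, hα.2]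

theorem sum_mul_patternWeight_cons (F : (Fin (n + 1) → Bool) → ℝ) :
    ∑ d, F d * patternWeight α d =
      ∑ b : Bool, ∑ c : Fin n → Bool,
        F (Fin.cons b c) * ((if b then α else 1 - α) * patternWeight α c) := by
  rw [← (Fin.consEquiv fun _ => Bool).sum_comp, Fintype.sum_prod_type]
  simp [patternWeight, Fin.prod_univ_succ, Fin.consEquiv]

def IsPatternMeasure (G : SimpleGraph V) (α : ℝ) (ν : Set V → ℝ) : Prop :=
  ∀ (S : Set V) {n : ℕ} (a : Fin n → V) (v : (Fin n → Bool) → V),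
    Function.Injective a → SupportsSet G a S → RealizesPatterns G a v → ν S = patVal α S v

namespace IsPatternMeasure

theorem sum_mul_eq (hν : IsPatternMeasure G α ν) {a : Fin n → V} {v : (Fin n → Bool) → V}
    (ha : Function.Injective a) (hv : RealizesPatterns G a v) {ι : Type*} [Fintype ι]
    (t : ι → ℝ) (U : ι → Set V) (hU : ∀ i, SupportsSet G a (U i)) :
    ∑ i, t i * ν (U i) =
      ∑ c, (∑ i, t i * if v c ∈ U i then 1 else 0) * patternWeight α c := by
  simp only [hν _ a v ha (hU _) hv, patVal, Finset.mul_sum, Finset.sum_mul]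
  rw [Finset.sum_comm]
  simp only [patternWeight, mul_assoc]

theorem patternClass_eq (hν : IsPatternMeasure G α ν) (hG : HasExtensionProperty G)
    {a : Fin n → V} (ha : Function.Injective a) (c : Fin n → Bool) :
    ν (patternClass G a c) = patternWeight α c := by
  obtain ⟨v, hv⟩ := exists_realizesPatterns hG ha
  rw [hν _ a v ha (supportsSet_patternClass a c) hv, patVal,
    Finset.sum_eq_single_of_mem c (Finset.mem_univ c), if_pos (hv.mem_patternClass c), one_mul]
  · rfl
  intro c' _ hc'
  rw [if_neg fun h => hc' (eq_of_mem_patternClass (hv.mem_patternClass c') h), zero_mul]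

end IsPatternMeasure

def lowerSums (G : SimpleGraph V) (ν : Set V → ℝ) (g : V → ℝ) : Set ℝ :=
  {r : ℝ | ∃ (m : ℕ) (t : Fin m → ℝ) (U : Fin m → Set V),
    (∀ i, 0 ≤ t i) ∧ (∀ i, FinitelySupportedSet G (U i)) ∧
    (∀ x, (∑ i, t i * (if x ∈ U i then (1:ℝ) else 0)) ≤ g x) ∧
    r = ∑ i, t i * ν (U i)}

theorem nomIntegral_eq_sSup_lowerSums (g : V → ℝ) :
    nomIntegral G ν g = sSup (lowerSums G ν g) :=
  rfl

theorem sum_mem_lowerSums {g : V → ℝ} {ι : Type*} [Fintype ι] (t : ι → ℝ) (U : ι → Set V)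
    (ht : ∀ i, 0 ≤ t i) (hU : ∀ i, FinitelySupportedSet G (U i))
    (hg : ∀ x, ∑ i, t i * (if x ∈ U i then 1 else 0) ≤ g x) :
    ∑ i, t i * ν (U i) ∈ lowerSums G ν g := by
  let e := (Fintype.equivFin ι).symm
  refine ⟨_, t ∘ e, U ∘ e, fun i => ht _, fun i => hU _, fun x => ?_, ?_⟩
  · have hgx := hg x
    rwa [← e.sum_comp] at hgx
  · exact (e.sum_comp _).symm

theorem nomIntegral_nonneg {g : V → ℝ} (hg : ∀ x, 0 ≤ g x) : 0 ≤ nomIntegral G ν g := by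
  rw [nomIntegral_eq_sSup_lowerSums]
  exact Real.sSup_nonneg' ⟨0, ⟨0, Fin.elim0, Fin.elim0, Fin.rec0, Fin.rec0, by simpa using hg,
    by simp⟩, le_rfl⟩

namespace IsPatternMeasure

variable (hν : IsPatternMeasure G α ν) (hG : HasExtensionProperty G) (hα : α ∈ Set.Icc (0:ℝ) 1)
include hν hG hα

/-- After refining the supports of the simple function and of the pattern classes to one
common tuple, the consistency of `ν` does the marginalisation. -/
theorem le_sum_of_mem_lowerSums {a : Fin n → V} (ha : Function.Injective a) {g : V → ℝ}
    {h : (Fin n → Bool) → ℝ} (hgh : ∀ c, ∀ x ∈ patternClass G a c, g x = h c)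
    {r : ℝ} (hr : r ∈ lowerSums G ν g) : r ≤ ∑ c, h c * patternWeight α c := by
  obtain ⟨m, t, U, -, hU, hdom, rfl⟩ := hr
  choose k b _ hbU using hU
  obtain ⟨N, a', ha', hrange⟩ :=
    ((Set.finite_range a).union (Set.finite_iUnion fun i => Set.finite_range (b i))).fin_param
  obtain ⟨v', hv'⟩ := exists_realizesPatterns hG ha'
  have hsub : Set.range a ⊆ Set.range a' := hrange ▸ Set.subset_union_left
  have hsubU : ∀ i, Set.range (b i) ⊆ Set.range a' := fun i =>
    hrange ▸ Set.subset_union_of_subset_right (Set.subset_iUnion (fun j => Set.range (b j)) i) _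
  calc ∑ i, t i * ν (U i)
      = ∑ c', (∑ i, t i * if v' c' ∈ U i then 1 else 0) * patternWeight α c' :=
        hν.sum_mul_eq ha' hv' t U fun i => (hbU i).mono (hsubU i)
    _ ≤ ∑ c', g (v' c') * patternWeight α c' :=
        Finset.sum_le_sum fun c' _ =>
          mul_le_mul_of_nonneg_right (hdom _) (patternWeight_nonneg hα c')
    _ = ∑ c', (∑ c, h c * if v' c' ∈ patternClass G a c then 1 else 0) * patternWeight α c' := by
        refine Finset.sum_congr rfl fun c' _ => ?_
        obtain ⟨c, hc⟩ := exists_mem_patternClass (G := G) fun hmem => (hv' c').1 (hsub hmem)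
        rw [sum_mul_ite_mem_patternClass hc, hgh c _ hc]
    _ = ∑ c, h c * ν (patternClass G a c) :=
        (hν.sum_mul_eq ha' hv' h _ fun c => (supportsSet_patternClass a c).mono hsub).symm
    _ = ∑ c, h c * patternWeight α c := by simp only [hν.patternClass_eq hG ha]

theorem nomIntegral_eq {a : Fin n → V} (ha : Function.Injective a) {g : V → ℝ}
    {h : (Fin n → Bool) → ℝ} (hg : ∀ x, 0 ≤ g x)
    (hgh : ∀ c, ∀ x ∈ patternClass G a c, g x = h c) :
    nomIntegral G ν g = ∑ c, h c * patternWeight α c := by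
  rw [nomIntegral_eq_sSup_lowerSums]
  refine IsGreatest.csSup_eq ⟨?_, fun r hr => hν.le_sum_of_mem_lowerSums hG hα ha hgh hr⟩
  simp only [← hν.patternClass_eq hG ha]
  refine sum_mem_lowerSums h _ (fun c => ?_) (fun c => ⟨n, a, ha, supportsSet_patternClass a c⟩)
    fun x => ?_
  · obtain ⟨x, hx⟩ := patternClass_nonempty hG ha c
    exact hgh c x hx ▸ hg x
  · by_cases hx : ∃ c, x ∈ patternClass G a c
    · obtain ⟨c, hc⟩ := hx
      rw [sum_mul_ite_mem_patternClass hc, hgh c x hc]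
    · push Not at hx
      simp only [hx, if_false, mul_zero, Finset.sum_const_zero]
      exact hg x

theorem nomIntegral_const {r : ℝ} (hr : 0 ≤ r) : nomIntegral G ν (fun _ => r) = r := by
  rw [hν.nomIntegral_eq hG hα (a := Fin.elim0) (Function.injective_of_subsingleton _)
    (h := fun _ => r) (fun _ => hr) fun _ _ _ => rfl]
  simp [patternWeight]

theorem nomIntegral_adj (x : V) :
    nomIntegral G ν (fun y => if G.Adj x y then 1 else 0) = α := by
  rw [hν.nomIntegral_eq hG hα (a := ![x]) (Function.injective_of_subsingleton _)
    (h := fun d => if d 0 then 1 else 0) (fun y => by split <;> norm_num) fun d y hy => ?_,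
    sum_mul_patternWeight_cons]
  · simp [patternWeight]
  · have hyx := hy.2 0
    simp only [Matrix.cons_val_zero] at hyx
    simp only [G.adj_comm x y, hyx]

end IsPatternMeasure

end PatternMeasure

section Fubini

variable {V : Type} [Countable V] {G : SimpleGraph V} {α : ℝ} {ν : Set V → ℝ} {n : ℕ}
  {a : Fin n → V} {f : V → V → ℝ} {v : (Fin n → Bool) → V}
  {u : (Fin n → Bool) → (Fin (n + 1) → Bool) → V}

/-- Both pairs have first entry of pattern `c`, second entry of pattern `c'`, and adjacency `b`,
so homogeneity identifies them. -/
theorem apply_realizer_cons_eq (hG : HasExtensionProperty G)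
    (hf : ∀ σ : G ≃g G, (∀ i, σ (a i) = a i) → ∀ x y, f (σ x) (σ y) = f x y)
    (hv : RealizesPatterns G a v) (hu : ∀ c, RealizesPatterns G (Fin.cons (v c) a) (u c))
    (b : Bool) (c c' : Fin n → Bool) :
    f (v c) (u c (Fin.cons b c')) = f (u c' (Fin.cons b c)) (v c') := by
  obtain ⟨hx', hne, hadj⟩ := mem_patternClass_cons.1 ((hu c').mem_patternClass (Fin.cons b c))
  refine eq_of_mem_patternClass_cons_of_invariant hG hf (hv.mem_patternClass c) hx'
    ((hu c).mem_patternClass _) (mem_patternClass_cons.2 ⟨hv.mem_patternClass c', hne.symm, ?_⟩)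
  rwa [G.adj_comm]

namespace IsPatternMeasure

variable (hν : IsPatternMeasure G α ν) (hG : HasExtensionProperty G) (hα : α ∈ Set.Icc (0:ℝ) 1)
include hν hG hα

theorem nomIntegral_nomIntegral_eq (ha : Function.Injective a)
    (hf : ∀ σ : G ≃g G, (∀ i, σ (a i) = a i) → ∀ x y, f (σ x) (σ y) = f x y)
    (hf0 : ∀ x y, 0 ≤ f x y)
    (hv : RealizesPatterns G a v) (hu : ∀ c, RealizesPatterns G (Fin.cons (v c) a) (u c)) :
    nomIntegral G ν (fun x => nomIntegral G ν (fun y => f x y)) =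
      ∑ c, (∑ d, f (v c) (u c d) * patternWeight α d) * patternWeight α c := by
  refine hν.nomIntegral_eq hG hα ha (fun x => nomIntegral_nonneg (hf0 x)) fun c x hx => ?_
  refine hν.nomIntegral_eq hG hα (Fin.cons_injective_of_injective hx.1 ha) (hf0 x)
    fun d y hy => ?_
  exact eq_of_mem_patternClass_cons_of_invariant hG hf hx (hv.mem_patternClass c) hy
    ((hu c).mem_patternClass d)

theorem nomIntegral_comm (ha : Function.Injective a)
    (hf : ∀ σ : G ≃g G, (∀ i, σ (a i) = a i) → ∀ x y, f (σ x) (σ y) = f x y)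
    (hf0 : ∀ x y, 0 ≤ f x y) :
    nomIntegral G ν (fun x => nomIntegral G ν (fun y => f x y)) =
      nomIntegral G ν (fun y => nomIntegral G ν (fun x => f x y)) := by
  obtain ⟨v, hv⟩ := exists_realizesPatterns hG ha
  choose u hu using fun c =>
    exists_realizesPatterns hG (Fin.cons_injective_of_injective (hv.mem_patternClass c).1 ha)
  rw [hν.nomIntegral_nomIntegral_eq hG hα ha hf hf0 hv hu,
    hν.nomIntegral_nomIntegral_eq hG hα ha (fun σ hσ x y => hf σ hσ y x) (fun x y => hf0 y x)
      hv hu]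
  simp only [sum_mul_patternWeight_cons, Finset.sum_mul]
  -- put the adjacency bit outermost on both sides, then swap `c` and `c'` on the left
  rw [Finset.sum_comm]
  conv_rhs => rw [Finset.sum_comm]
  refine Finset.sum_congr rfl fun b _ => ?_
  rw [Finset.sum_comm]
  refine Finset.sum_congr rfl fun c' _ => Finset.sum_congr rfl fun c _ => ?_
  rw [apply_realizer_cons_eq hG hf hv hu]
  ring

end IsPatternMeasure

end Fubini

open scoped Classical in
theorem stmt14_general {V : Type} [Countable V]
    (G : SimpleGraph V) (hG : HasExtensionProperty G)
    (α : ℝ) (hα : α ∈ Set.Icc (0:ℝ) 1)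
    (ν : Set V → ℝ)
    (hν : ∀ (S : Set V) {n : ℕ} (a : Fin n → V) (v : (Fin n → Bool) → V),
      Function.Injective a → SupportsSet G a S → RealizesPatterns G a v →
        ν S = patVal α S v)
    (f : V → V → ℝ) (hf : FinSuppFun₂ G f)
    (hbd : ∀ x y, f x y ∈ Set.Icc (0:ℝ) 1) :
    nomIntegral G ν (fun x => nomIntegral G ν (fun y => f x y)) =
      nomIntegral G ν (fun y => nomIntegral G ν (fun x => f x y)) ∧
    nomIntegral G ν
        (fun x => nomIntegral G ν (fun y => if G.Adj x y then (1:ℝ) else 0)) = α ∧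
    nomIntegral G ν
        (fun y => nomIntegral G ν (fun x => if G.Adj x y then (1:ℝ) else 0)) = α := by
  have hν' : IsPatternMeasure G α ν := hν
  obtain ⟨n, a, ha, hfa⟩ := hf.exists_injective
  have hedge : nomIntegral G ν
      (fun x => nomIntegral G ν (fun y => if G.Adj x y then (1:ℝ) else 0)) = α := by
    simp only [hν'.nomIntegral_adj hG hα]
    exact hν'.nomIntegral_const hG hα hα.1
  refine ⟨hν'.nomIntegral_comm hG hα ha hfa fun x y => (hbd x y).1, hedge, ?_⟩
  simpa only [G.adj_comm] using hedge

open scoped Classical in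
/-- Fubini for `ν_α`: the measure `ν_α` on the Rado graph commutes with itself on
finitely-supported `[0,1]`-valued functions; in particular both iterated integrals
of the indicator of the edge relation equal `α`. -/
theorem stmt14 {V : Type} [Countable V] [Infinite V]
    (G : SimpleGraph V) (hG : HasExtensionProperty G)
    (α : ℝ) (hα : α ∈ Set.Icc (0:ℝ) 1)
    (ν : Set V → ℝ)
    (hν : ∀ (S : Set V) {n : ℕ} (a : Fin n → V) (v : (Fin n → Bool) → V),
      Function.Injective a → SupportsSet G a S → RealizesPatterns G a v →
        ν S = patVal α S v)
    (f : V → V → ℝ) (hf : FinSuppFun₂ G f)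
    (hbd : ∀ x y, f x y ∈ Set.Icc (0:ℝ) 1) :
    nomIntegral G ν (fun x => nomIntegral G ν (fun y => f x y)) =
      nomIntegral G ν (fun y => nomIntegral G ν (fun x => f x y)) ∧
    nomIntegral G ν
        (fun x => nomIntegral G ν (fun y => if G.Adj x y then (1:ℝ) else 0)) = α ∧
    nomIntegral G ν
        (fun y => nomIntegral G ν (fun x => if G.Adj x y then (1:ℝ) else 0)) = α :=
  stmt14_general G hG α hα ν hν f hf hbd
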